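/- Fix λ ∈ (0,1), positive integer k with λ^k ≤ 1/5, positive integers N_v and N_s with λN_s ∈ ℤ, and c ∈ (0,1). Suppose for every one of the C(N_s, λN_s) choices of a set of λN_s corrupted unit sectors, the number of lost files is a sum of N_v independent Bernoulli(λ^k) indicator variables. Then with probability at least 1 − c, for every corruption choice the number of lost files γ satisfies γ ≤ max{5·N_v·λ^k, N_v·λ^(k/2), 4·(log C(N_s, λN_s) − log c)/(k·log(1/λ))}. -/

import Mathlib

open Real MeasureTheory ProbabilityTheory

private theorem log5_ge_85 : (8:ℝ)/5 ≤ Real.log 5 := by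
  have h1 : Real.exp (8/5) ≤ 5 := by
    have h8 : Real.exp ((8:ℝ)/5) ^ (5:ℕ) = Real.exp 8 := by
      rw [← Real.exp_nat_mul]; norm_num
    have h2 : Real.exp ((8:ℝ)/5) ^ (5:ℕ) ≤ 5 ^ (5:ℕ) := by
      rw [h8]
      calc Real.exp 8 = Real.exp 1 ^ (8:ℕ) := by rw [← Real.exp_nat_mul]; norm_num
        _ ≤ 2.7182818286 ^ (8:ℕ) :=
          pow_le_pow_left₀ (Real.exp_pos 1).le Real.exp_one_lt_d9.le 8
        _ ≤ 5 ^ (5:ℕ) := by norm_num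
    exact le_of_pow_le_pow_left₀ (by norm_num) (by norm_num) h2
  calc (8:ℝ)/5 = Real.log (Real.exp (8/5)) := (Real.log_exp _).symm
    _ ≤ Real.log 5 := Real.log_le_log (Real.exp_pos _) h1

/-- The key scalar inequality: existence of a good Chernoff parameter `t`. -/
private theorem key_t (L M NvE D : ℝ) (hL : Real.log 5 ≤ L) (hM0 : 0 < M)
    (h1 : 5 * NvE ≤ M)  -- NvE = Nv * p with p = exp (-L)
    (h2 : NvE * Real.exp (L/2) ≤ M)  -- Nv * exp(-L/2) ≤ M
    (hNvE : 0 ≤ NvE)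
    (h3 : D ≤ M * L / 4) :
    ∃ t : ℝ, 0 ≤ t ∧ NvE * (Real.exp t - 1) + D ≤ t * M := by
  have hlog5 := log5_ge_85
  by_cases hcase : L ≤ 2 * Real.log 5
  · refine ⟨Real.log 5, by linarith, ?_⟩
    rw [Real.exp_log (by norm_num : (0:ℝ) < 5)]
    nlinarith [mul_le_mul_of_nonneg_left hcase (le_of_lt hM0)]
  · push_neg at hcase
    refine ⟨L/2, by linarith, ?_⟩
    -- key: exp (-(L/2)) ≥ 1 - L/4  (using L/2 ≥ log 5)
    have hx : Real.log 5 ≤ L/2 := by linarith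
    have hexp : 1 - L/4 ≤ Real.exp (-(L/2)) := by
      have h5 : Real.exp (Real.log 5 - L/2) = 5 * Real.exp (-(L/2)) := by
        rw [show Real.log 5 - L/2 = Real.log 5 + -(L/2) by ring, Real.exp_add,
          Real.exp_log (by norm_num : (0:ℝ) < 5)]
      have hb := Real.add_one_le_exp (Real.log 5 - L/2)
      rw [h5] at hb
      nlinarith
    -- NvE * (exp(L/2) - 1) = (NvE * exp(L/2)) * (1 - exp(-(L/2))) ≤ M * (1 - exp(-(L/2)))
    have hfac : NvE * (Real.exp (L/2) - 1)
        = (NvE * Real.exp (L/2)) * (1 - Real.exp (-(L/2))) := by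
      rw [Real.exp_neg]
      field_simp
    have hpos : 0 ≤ 1 - Real.exp (-(L/2)) := by
      have : Real.exp (-(L/2)) ≤ 1 := by
        rw [Real.exp_le_one_iff]; linarith
      linarith
    have hb2 : NvE * (Real.exp (L/2) - 1) ≤ M * (1 - Real.exp (-(L/2))) := by
      rw [hfac]; exact mul_le_mul_of_nonneg_right h2 hpos
    nlinarith

/-- Robustness with union bound over corruption scenarios: for each of the
    C(N_s, λN_s) choices of a corrupted set of λN_s unit sectors, the number of
    lost files is a sum of N_v independent Bernoulli(λ^k) indicators. Then with
    probability at least 1 − c, for every corruption choice the number of lost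
    files is at most
    max{5·N_v·λ^k, N_v·λ^(k/2), 4·(log C(N_s, λN_s) − log c)/(k·log(1/λ))}. -/
theorem robustness_union_bound {Ω : Type*} [MeasurableSpace Ω]
    (μ : Measure Ω) [IsProbabilityMeasure μ]
    (l : ℝ) (hl0 : 0 < l) (hl1 : l < 1)
    (k : ℕ) (hk : 0 < k) (hpk : l ^ k ≤ 1 / 5)
    (Nv Ns m : ℕ) (hNv : 0 < Nv) (hNs : 0 < Ns) (hm : (m : ℝ) = l * Ns)
    (c : ℝ) (hc0 : 0 < c) (hc1 : c < 1)
    (X : {A : Finset (Fin Ns) // A.card = m} → Fin Nv → Ω → ℝ)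
    (hmeas : ∀ A i, Measurable (X A i))
    (hber : ∀ A i ω, X A i ω = 0 ∨ X A i ω = 1)
    (hp : ∀ A i, μ {ω | X A i ω = 1} = ENNReal.ofReal (l ^ k))
    (hindep : ∀ A, iIndepFun (X A) μ) :
    ENNReal.ofReal (1 - c) ≤
      μ {ω | ∀ A, ∑ i, X A i ω ≤
        max (5 * Nv * l ^ k)
          (max ((Nv : ℝ) * l ^ ((k : ℝ) / 2))
            (4 * (Real.log (Ns.choose m) - Real.log c) / (k * Real.log (1 / l))))} := by
  classical
  set p : ℝ := l ^ k with hp_def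
  have hp0 : 0 < p := pow_pos hl0 k
  have hlogl : Real.log (1/l) = - Real.log l := by rw [one_div, Real.log_inv]
  have hlogl0 : 0 < Real.log (1/l) := Real.log_pos (by rw [one_lt_div hl0]; exact hl1)
  set L : ℝ := (k:ℝ) * Real.log (1/l) with hL_def
  have hL0 : 0 < L := mul_pos (by exact_mod_cast hk) hlogl0
  have hpL : p = Real.exp (-L) := by
    rw [hp_def, hL_def, hlogl]
    rw [show -((k:ℝ) * -Real.log l) = (k:ℝ) * Real.log l by ring]
    rw [Real.exp_nat_mul, Real.exp_log hl0]
  have hhalf : l ^ ((k : ℝ) / 2) = Real.exp (-(L/2)) := by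
    rw [Real.rpow_def_of_pos hl0, hL_def, hlogl]
    congr 1; ring
  have hL5 : Real.log 5 ≤ L := by
    have h15 : (1:ℝ)/5 = Real.exp (-Real.log 5) := by
      rw [Real.exp_neg, Real.exp_log (by norm_num : (0:ℝ) < 5)]
      norm_num
    have : Real.exp (-L) ≤ Real.exp (-Real.log 5) := by
      rw [← h15, ← hpL]; exact hpk
    linarith [Real.exp_le_exp.mp this]
  set C : ℝ := (Ns.choose m : ℝ) with hC_def
  have hmNs : m ≤ Ns := by
    have : (m:ℝ) ≤ (Ns:ℝ) := by
      rw [hm]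
      calc l * Ns ≤ 1 * Ns := by
            apply mul_le_mul_of_nonneg_right hl1.le (Nat.cast_nonneg _)
        _ = Ns := one_mul _
    exact_mod_cast this
  have hC1 : 1 ≤ C := by
    rw [hC_def]; exact_mod_cast Nat.one_le_iff_ne_zero.mpr (Nat.choose_pos hmNs).ne'
  have hC0 : 0 < C := lt_of_lt_of_le one_pos hC1
  set D : ℝ := Real.log C - Real.log c with hD_def
  have hD0 : 0 < D := by
    have h1 : 0 ≤ Real.log C := Real.log_nonneg hC1
    have h2 : Real.log c < 0 := Real.log_neg hc0 hc1
    rw [hD_def]; linarith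
  set M : ℝ := max (5 * Nv * p)
      (max ((Nv : ℝ) * l ^ ((k : ℝ) / 2)) (4 * D / L)) with hM_def
  have hM1 : 5 * (Nv:ℝ) * p ≤ M := le_max_left _ _
  have hM2 : (Nv:ℝ) * l ^ ((k : ℝ) / 2) ≤ M := le_trans (le_max_left _ _) (le_max_right _ _)
  have hM3 : 4 * D / L ≤ M := le_trans (le_max_right _ _) (le_max_right _ _)
  have hM0 : 0 < M := lt_of_lt_of_le (by positivity) hM1
  have hDM : D ≤ M * L / 4 := by
    rw [div_le_iff₀ hL0] at hM3
    linarith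
  -- obtain the Chernoff parameter
  obtain ⟨t, ht0, hkey⟩ := key_t L M ((Nv:ℝ) * p) D hL5 hM0
    (by linarith) (by
      rw [hpL, mul_assoc, ← Real.exp_add, show -L + L/2 = -(L/2) by ring, ← hhalf]
      exact hM2)
    (by positivity) hDM
  have hcCpos : 0 ≤ c / C := by positivity
  clear_value p L C D M
  -- per-scenario integrability and mgf
  have hint1 : ∀ A i, Integrable (fun ω => Real.exp (t * X A i ω)) μ := by
    intro A i
    refine Integrable.mono' (integrable_const (Real.exp (|t|)))
      ((hmeas A i).const_mul t).exp.aestronglyMeasurable (ae_of_all _ fun ω => ?_)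
    rw [Real.norm_eq_abs, abs_of_pos (Real.exp_pos _), Real.exp_le_exp]
    rcases hber A i ω with h | h <;> rw [h]
    · simpa using abs_nonneg t
    · rw [mul_one]; exact le_abs_self t
  have hXind : ∀ A i, X A i = Set.indicator {ω | X A i ω = 1} (fun _ => (1:ℝ)) := by
    intro A i
    funext ω
    simp only [Set.indicator_apply, Set.mem_setOf_eq]
    by_cases h : X A i ω = 1
    · rw [if_pos h, h]
    · rw [if_neg h]
      rcases hber A i ω with h0 | h1
      · exact h0
      · exact absurd h1 h
  have hSet : ∀ A i, MeasurableSet {ω | X A i ω = 1} := by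
    intro A i
    exact hmeas A i (measurableSet_singleton 1)
  have hXint : ∀ A i, Integrable (X A i) μ := by
    intro A i
    rw [hXind A i]
    exact (integrable_const (1:ℝ)).indicator (hSet A i)
  have hXval : ∀ A i, ∫ ω, X A i ω ∂μ = p := by
    intro A i
    conv_lhs => rw [show (fun ω => X A i ω) = X A i from rfl, hXind A i]
    rw [integral_indicator_const _ (hSet A i), measureReal_def, hp A i,
      ENNReal.toReal_ofReal hp0.le, smul_eq_mul, mul_one]
  have hmgf : ∀ A i, mgf (X A i) μ t = 1 + (Real.exp t - 1) * p := by
    intro A i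
    have hXeq : (fun ω => Real.exp (t * X A i ω))
        = fun ω => 1 + (Real.exp t - 1) * X A i ω := by
      funext ω
      rcases hber A i ω with h | h <;> rw [h] <;> simp
    rw [mgf, hXeq]
    rw [integral_add (integrable_const 1) ((hXint A i).const_mul _)]
    rw [integral_const, measureReal_def, measure_univ, ENNReal.toReal_one, one_smul,
      integral_const_mul, hXval A i]
  -- Chernoff bound per scenario
  have hA : ∀ A : {A : Finset (Fin Ns) // A.card = m},
      μ {ω | M ≤ ∑ i, X A i ω} ≤ ENNReal.ofReal (c / C) := by
    intro A
    have hSeq : (∑ i, X A i) = fun ω => ∑ i, X A i ω := by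
      funext ω; exact Finset.sum_apply ω Finset.univ (X A)
    have hint_sum : Integrable (fun ω => Real.exp (t * (∑ i, X A i) ω)) μ :=
      (hindep A).integrable_exp_mul_sum (hmeas A) (fun i _ => hint1 A i)
    rw [hSeq] at hint_sum
    have hcher := measure_ge_le_exp_mul_mgf (X := fun ω => ∑ i, X A i ω) (μ := μ) M ht0 hint_sum
    have hmgfsum := (hindep A).mgf_sum (hmeas A) (t := t) Finset.univ
    rw [hSeq] at hmgfsum
    rw [hmgfsum] at hcher
    have hbase0 : (0:ℝ) ≤ 1 + (Real.exp t - 1) * p := by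
      have : 1 ≤ Real.exp t := Real.one_le_exp ht0
      nlinarith
    have hprod : ∏ i : Fin Nv, mgf (X A i) μ t = (1 + (Real.exp t - 1) * p) ^ Nv := by
      rw [Finset.prod_congr rfl (fun i _ => hmgf A i), Finset.prod_const,
        Finset.card_univ, Fintype.card_fin]
    rw [hprod] at hcher
    have hfinal : Real.exp (-t * M) * (1 + (Real.exp t - 1) * p) ^ Nv ≤ c / C := by
      have hb1 : (1 + (Real.exp t - 1) * p) ^ Nv
          ≤ Real.exp ((Nv:ℝ) * ((Real.exp t - 1) * p)) := by
        calc (1 + (Real.exp t - 1) * p) ^ Nv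
            ≤ Real.exp ((Real.exp t - 1) * p) ^ Nv :=
              pow_le_pow_left₀ hbase0
                (by linarith [Real.add_one_le_exp ((Real.exp t - 1) * p)]) Nv
          _ = Real.exp ((Nv:ℝ) * ((Real.exp t - 1) * p)) := by
              rw [← Real.exp_nat_mul]
      calc Real.exp (-t * M) * (1 + (Real.exp t - 1) * p) ^ Nv
          ≤ Real.exp (-t * M) * Real.exp ((Nv:ℝ) * ((Real.exp t - 1) * p)) := by
            exact mul_le_mul_of_nonneg_left hb1 (Real.exp_pos _).le
        _ = Real.exp ((Nv:ℝ) * ((Real.exp t - 1) * p) - t * M) := by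
            rw [← Real.exp_add]; ring_nf
        _ ≤ Real.exp (-D) := by
            apply Real.exp_le_exp.mpr
            have h' : (Nv:ℝ) * ((Real.exp t - 1) * p) = (Nv:ℝ) * p * (Real.exp t - 1) := by
              ring
            rw [h']
            linarith [hkey]
        _ = c / C := by
            rw [hD_def, neg_sub, Real.exp_sub, Real.exp_log hc0, Real.exp_log hC0]
    rw [ENNReal.le_ofReal_iff_toReal_le (measure_ne_top μ _) hcCpos]
    exact le_trans hcher hfinal
  -- union bound
  set G := {ω | ∀ A : {A : Finset (Fin Ns) // A.card = m}, ∑ i, X A i ω ≤ M} with hG_def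
  have hSmeas : ∀ A : {A : Finset (Fin Ns) // A.card = m},
      Measurable (fun ω => ∑ i, X A i ω) := by
    intro A
    exact Finset.measurable_sum _ (fun i _ => hmeas A i)
  have hGmeas : MeasurableSet G := by
    have : G = ⋂ A : {A : Finset (Fin Ns) // A.card = m}, {ω | ∑ i, X A i ω ≤ M} := by
      ext ω; simp [hG_def, Set.mem_iInter]
    rw [this]
    exact MeasurableSet.iInter (fun A => measurableSet_le (hSmeas A) measurable_const)
  have hcard : (Fintype.card {A : Finset (Fin Ns) // A.card = m}) = Ns.choose m := by
    rw [Fintype.card_finset_len, Fintype.card_fin]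
  have hGc : μ Gᶜ ≤ ENNReal.ofReal c := by
    have hsub : Gᶜ ⊆ ⋃ A : {A : Finset (Fin Ns) // A.card = m}, {ω | M ≤ ∑ i, X A i ω} := by
      intro ω hω
      simp only [hG_def, Set.mem_compl_iff, Set.mem_setOf_eq, not_forall] at hω
      obtain ⟨A, hA'⟩ := hω
      exact Set.mem_iUnion.2 ⟨A, le_of_lt (lt_of_not_ge hA')⟩
    calc μ Gᶜ ≤ μ (⋃ A : {A : Finset (Fin Ns) // A.card = m}, {ω | M ≤ ∑ i, X A i ω}) :=
          measure_mono hsub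
      _ ≤ ∑' A : {A : Finset (Fin Ns) // A.card = m}, μ {ω | M ≤ ∑ i, X A i ω} :=
          measure_iUnion_le _
      _ = ∑ A : {A : Finset (Fin Ns) // A.card = m}, μ {ω | M ≤ ∑ i, X A i ω} :=
          tsum_fintype _
      _ ≤ ∑ A : {A : Finset (Fin Ns) // A.card = m}, ENNReal.ofReal (c / C) :=
          Finset.sum_le_sum (fun A _ => hA A)
      _ = (Fintype.card {A : Finset (Fin Ns) // A.card = m}) * ENNReal.ofReal (c / C) := by
          rw [Finset.sum_const, Finset.card_univ, nsmul_eq_mul]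
      _ = ENNReal.ofReal c := by
          rw [hcard]
          rw [show ((Ns.choose m : ℕ) : ENNReal) = ENNReal.ofReal C from
            hC_def ▸ (ENNReal.ofReal_natCast _).symm]
          rw [← ENNReal.ofReal_mul hC0.le]
          congr 1
          field_simp
  -- conclude
  have hgoal : ENNReal.ofReal (1 - c) ≤ μ G := by
    have hcompl : μ Gᶜ = 1 - μ G := by
      rw [measure_compl hGmeas (measure_ne_top μ G), measure_univ]
    calc ENNReal.ofReal (1 - c) = 1 - ENNReal.ofReal c := by
          rw [ENNReal.ofReal_sub _ hc0.le, ENNReal.ofReal_one]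
      _ ≤ 1 - μ Gᶜ := tsub_le_tsub_left hGc 1
      _ = 1 - (1 - μ G) := by rw [hcompl]
      _ = μ G := ENNReal.sub_sub_cancel (by norm_num) prob_le_one
  exact hgoal
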